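/- arXiv:1602.00936 — 5 statements merged into one kernel-verified Lean document; each statement's English description precedes it below -/
import Mathlib

section
/- Let A(X) be the free complex vector space on the proper sequences in P(X), equipped with the bilinear extension of the sequence multiplication. For I a proper subset of X, write Î = {I, X∖I} ∈ A(X). If a, b ∈ A(X) and (1 − Î)·a = 0 (where 1 = {X} is the unit), then (1 − Î)·(b·a) = 0. -/
/-!
Left multiplication by a sequence `k` of pairwise disjoint sets fixes every sequence whose
blocks are nonempty and each contained in a block of `k`. The hypothesis says `a = Î·a`, so
the sequences of `a` are refined by `{I, X∖I}`; the blocks of `b·a` are intersections with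
blocks of `a`, so the sequences of `b·a` are refined by `{I, X∖I}` and by `{X}`, and both
`1` and `Î` fix `b·a`.
-/

open scoped Classical

namespace GRF

variable {α : Type*} [DecidableEq α]

/-- `J` is a proper (nonempty, not everything) subset of `X`. -/
def IsProperSubset (X J : Finset α) : Prop := J ⊆ X ∧ J ≠ ∅ ∧ J ≠ X

/-- A proper sequence in `P(X)`: a nonempty list of pairwise disjoint nonempty
subsets of `X` with union `X`. -/
def IsProperSeq (X : Finset α) (c : List (Finset α)) : Prop :=
  c ≠ [] ∧ (∀ J ∈ c, J ≠ ∅) ∧ List.Pairwise (fun I J => I ∩ J = ∅) c ∧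
    c.foldr (· ∪ ·) ∅ = X

/-- The product of two sequences: all `A_i ∩ B_j`, ordered first by `j` then by `i`,
with empty intersections deleted. -/
noncomputable def seqMul (a b : List (Finset α)) : List (Finset α) :=
  ((b.map fun B => a.map fun A => A ∩ B).flatten).filter fun J => J ≠ ∅

/-- The set `S' = {J ⊆ X : X \ J ∈ S}` opposite to `S`. -/
def opp (X : Finset α) (S : Set (Finset α)) : Set (Finset α) :=
  {J | J ⊆ X ∧ X \ J ∈ S}

/-- A paracell associated to `X`. -/
def IsParacell (X : Finset α) (S : Set (Finset α)) : Prop :=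
  S.Nonempty ∧ (∀ J ∈ S, IsProperSubset X J) ∧
    ∀ I ∈ S, ∀ J ∈ S, I ∩ J ∈ S ∨ I ∪ J ∈ S

/-- A precell associated to `X`. -/
def IsPrecell (X : Finset α) (S : Set (Finset α)) : Prop :=
  IsParacell X S ∧ ∀ J : Finset α, IsProperSubset X J → J ∈ S ∨ X \ J ∈ S

/-- A cell associated to `X`: a precell admitting real weights with zero total sum,
positive on all members of the cell. -/
def IsCell (X : Finset α) (S : Set (Finset α)) : Prop :=
  IsPrecell X S ∧ ∃ s : α → ℝ,
    (∑ j ∈ X, s j) = 0 ∧ ∀ J ∈ S, 0 < ∑ j ∈ J, s j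

/-- `Y ↓ S` for `S` a paracell associated to `X`. -/
def cellDown (Y X : Finset α) (S : Set (Finset α)) : Set (Finset α) :=
  {J | IsProperSubset (Y ∪ X) J ∧ (J ∩ X = X ∨ J ∩ X ∈ S)}

/-- `Y ↑ S'` for `S'` a paracell associated to `X`. -/
def cellUp (Y X : Finset α) (S : Set (Finset α)) : Set (Finset α) :=
  {J | IsProperSubset (Y ∪ X) J ∧ (J ∩ X = ∅ ∨ J ∩ X ∈ S)}

/-- `Y ↓ j` for a single index `j`. -/
def ptDown (Y : Finset α) (j : α) : Set (Finset α) :=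
  {J | IsProperSubset (insert j Y) J ∧ j ∈ J}

/-- `Y ↑ j` for a single index `j`. -/
def ptUp (Y : Finset α) (j : α) : Set (Finset α) :=
  {J | IsProperSubset (insert j Y) J ∧ j ∉ J}

/-- The underlying vector space of the algebra `A(X)`: formal complex linear
combinations of sequences of subsets. -/
abbrev AX (α : Type*) [DecidableEq α] : Type _ := (List (Finset α)) →₀ ℂ

/-- The multiplication of `A(X)`, extending `seqMul` bilinearly. -/
noncomputable def amul (x y : AX α) : AX α :=
  x.sum fun a ca => y.sum fun b cb => Finsupp.single (seqMul a b) (ca * cb)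

/-- The unit `{X}` of `A(X)`. -/
noncomputable def oneA (X : Finset α) : AX α := Finsupp.single [X] 1

/-- `Î = {I, X \ I}` as an element of `A(X)`. -/
noncomputable def hatI (X I : Finset α) : AX α := Finsupp.single [I, X \ I] 1

/-- Product of a list of elements of `A(X)` (with unit `{X}`). -/
noncomputable def aprod (X : Finset α) (l : List (AX α)) : AX α :=
  l.foldr amul (oneA X)

/-- A `ν`-chain associated to `S'`: a proper sequence all of whose proper initial
partial unions lie in `S'`. -/
def IsChainFor (X : Finset α) (S' : Set (Finset α)) (c : List (Finset α)) : Prop :=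
  IsProperSeq X c ∧
    ∀ r : ℕ, 0 < r → r < c.length → ((c.take r).foldr (· ∪ ·) ∅) ∈ S'

lemma IsProperSeq.nodup {X : Finset α} {c : List (Finset α)}
    (h : IsProperSeq X c) : c.Nodup := by
  obtain ⟨-, hne, hpw, -⟩ := h
  refine List.Pairwise.imp_of_mem ?_ hpw
  intro a b ha _ hab
  intro h'
  subst h'
  exact hne a ha (by simpa using hab)

/-- `U_S = Σ_ν Σ_{ν-chains for S'} (−1)^{ν−1} {J_1,…,J_ν}`, as a function of the
opposite paracell `S'`. -/
noncomputable def US [Fintype α] (X : Finset α) (S' : Set (Finset α)) : AX α :=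
  Finsupp.ofSupportFinite
    (fun c => if IsChainFor X S' c then (-1 : ℂ) ^ (c.length - 1) else 0)
    (Set.Finite.subset
      (List.finite_length_le (Finset α) (Fintype.card (Finset α)))
      (by
        intro c hc
        have h : IsChainFor X S' c := by
          by_contra h
          simp [Function.mem_support, h] at hc
        exact h.1.nodup.length_le_card))

/-- The underlying vector space of `A(A∪{1}) ⊗ A(B∪{1})`. -/
abbrev AX2 (α : Type*) [DecidableEq α] : Type _ :=
  (List (Finset α) × List (Finset α)) →₀ ℂ

/-- The multiplication of the tensor product algebra. -/
noncomputable def tmul (x y : AX2 α) : AX2 α :=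
  x.sum fun a ca => y.sum fun b cb =>
    Finsupp.single (seqMul a.1 b.1, seqMul a.2 b.2) (ca * cb)

/-- The tensor `u ⊗ v` of two elements of `A(A∪{1})` and `A(B∪{1})`. -/
noncomputable def tens (u v : AX α) : AX2 α :=
  u.sum fun a ca => v.sum fun b cb => Finsupp.single (a, b) (ca * cb)

/-- The pair `(c_A, c_B)` of traces of a sequence `c` on `A∪{1}` and `B∪{1}`,
with empty sets deleted. -/
noncomputable def facSeq (A1 B1 : Finset α) (c : List (Finset α)) :
    List (Finset α) × List (Finset α) :=
  ((c.map fun J => J ∩ A1).filter fun J => J ≠ ∅,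
   (c.map fun J => J ∩ B1).filter fun J => J ≠ ∅)

/-- The factorization map `Fac : A(X) → A(A∪{1}) ⊗ A(B∪{1})`. -/
noncomputable def Fac (A1 B1 : Finset α) (x : AX α) : AX2 α :=
  x.sum fun c cc => Finsupp.single (facSeq A1 B1 c) cc

/-- The paracell `(S‖1,A)` built from opposite paracells `S`, `S'` relative to
`X = A ∪ B ∪ {o}`. -/
def restCell (A : Finset α) (o : α) (S S' : Set (Finset α)) : Set (Finset α) :=
  {J | IsProperSubset (insert o A) J ∧
    ((J ⊆ A ∧ J ∈ S) ∨ (o ∈ J ∧ A \ J ∈ S'))}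

def Refines (e k : List (Finset α)) : Prop := ∀ B ∈ e, B ≠ ∅ ∧ ∃ K ∈ k, B ⊆ K

omit [DecidableEq α] in
lemma Refines.trans {e d k : List (Finset α)} (hed : Refines e d) (hdk : Refines d k) :
    Refines e k := by
  intro B hB
  obtain ⟨hB0, D, hD, hBD⟩ := hed B hB
  obtain ⟨K, hK, hDK⟩ := (hdk D hD).2
  exact ⟨hB0, K, hK, hBD.trans hDK⟩

lemma mem_seqMul {a b : List (Finset α)} {J : Finset α} :
    J ∈ seqMul a b ↔ J ≠ ∅ ∧ ∃ A ∈ a, ∃ B ∈ b, A ∩ B = J := by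
  simp only [seqMul, List.mem_filter, List.mem_flatten, List.mem_map, decide_eq_true_eq]
  aesop

lemma refines_seqMul_left (a b : List (Finset α)) : Refines (seqMul a b) a := by
  intro J hJ
  obtain ⟨hJ0, A, hA, B, -, rfl⟩ := mem_seqMul.mp hJ
  exact ⟨hJ0, A, hA, Finset.inter_subset_left⟩

lemma refines_seqMul_right (a b : List (Finset α)) : Refines (seqMul a b) b := by
  intro J hJ
  obtain ⟨hJ0, A, -, B, hB, rfl⟩ := mem_seqMul.mp hJ
  exact ⟨hJ0, B, hB, Finset.inter_subset_right⟩

lemma filter_map_inter_eq_singleton {k : List (Finset α)} {B : Finset α}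
    (hk : k.Pairwise Disjoint) (hB : B ≠ ∅) (hBk : ∃ K ∈ k, B ⊆ K) :
    (k.map fun K => K ∩ B).filter (fun J => J ≠ ∅) = [B] := by
  induction k with
  | nil => simp at hBk
  | cons K k ih =>
    rw [List.pairwise_cons] at hk
    by_cases hBK : B ⊆ K
    · have hrest : ∀ K' ∈ k, K' ∩ B = ∅ := fun K' hK' =>
        Finset.disjoint_iff_inter_eq_empty.mp ((hk.1 K' hK').mono_left hBK).symm
      rw [List.map_cons, Finset.inter_eq_right.mpr hBK, List.filter_cons_of_pos (by simpa using hB),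
        List.filter_eq_nil_iff.mpr (by simpa using hrest)]
    · obtain ⟨K', hK', hBK'⟩ : ∃ K' ∈ k, B ⊆ K' := by simpa [hBK] using hBk
      have hKB : K ∩ B = ∅ :=
        Finset.disjoint_iff_inter_eq_empty.mp ((hk.1 K' hK').mono_right hBK')
      rw [List.map_cons, List.filter_cons_of_neg (by simp [hKB]), ih hk.2 ⟨K', hK', hBK'⟩]

lemma seqMul_eq_self_of_refines {k e : List (Finset α)} (hk : k.Pairwise Disjoint)
    (he : Refines e k) : seqMul k e = e := by
  induction e with
  | nil => rfl
  | cons B e ih =>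
    have hB := he B List.mem_cons_self
    have ih' := ih fun C hC => he C (List.mem_cons_of_mem _ hC)
    simp only [seqMul, List.map_cons, List.flatten_cons, List.filter_append] at ih' ⊢
    rw [filter_map_inter_eq_singleton hk hB.1 hB.2, ih']
    rfl

lemma subset_foldr_union_of_mem {B : Finset α} {l : List (Finset α)} (h : B ∈ l) :
    B ⊆ l.foldr (· ∪ ·) ∅ := by
  induction l with
  | nil => simp at h
  | cons C l ih =>
    rcases List.mem_cons.mp h with rfl | h
    · exact Finset.subset_union_left
    · exact (ih h).trans Finset.subset_union_right

lemma IsProperSeq.refines_singleton {X : Finset α} {c : List (Finset α)}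
    (h : IsProperSeq X c) : Refines c [X] := by
  obtain ⟨-, hne, -, hun⟩ := h
  exact fun B hB => ⟨hne B hB, X, List.mem_singleton_self X, hun ▸ subset_foldr_union_of_mem hB⟩

lemma amul_sub_left (x y z : AX α) : amul (x - y) z = amul x z - amul y z := by
  unfold amul
  refine Finsupp.sum_sub_index fun c r s => ?_
  rw [← Finsupp.sum_sub]
  exact Finsupp.sum_congr fun d _ => by rw [sub_mul, Finsupp.single_sub]

lemma mem_support_amul {x y : AX α} {e : List (Finset α)} (he : e ∈ (amul x y).support) :
    ∃ c ∈ x.support, ∃ d ∈ y.support, e = seqMul c d := by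
  obtain ⟨c, hc, he⟩ := Finset.mem_biUnion.mp (Finsupp.support_sum he)
  obtain ⟨d, hd, he⟩ := Finset.mem_biUnion.mp (Finsupp.support_sum he)
  exact ⟨c, hc, d, hd, Finset.mem_singleton.mp (Finsupp.support_single_subset he)⟩

lemma refines_of_mem_support_amul_single {k : List (Finset α)} {r : ℂ} {y : AX α}
    {e : List (Finset α)} (he : e ∈ (amul (Finsupp.single k r) y).support) : Refines e k := by
  obtain ⟨c, hc, d, -, rfl⟩ := mem_support_amul he
  rw [Finset.mem_singleton.mp (Finsupp.support_single_subset hc)]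
  exact refines_seqMul_left k d

lemma refines_of_mem_support_amul_right {x y : AX α} {k e : List (Finset α)}
    (hy : ∀ d ∈ y.support, Refines d k) (he : e ∈ (amul x y).support) : Refines e k := by
  obtain ⟨c, -, d, hd, rfl⟩ := mem_support_amul he
  exact (refines_seqMul_right c d).trans (hy d hd)

lemma amul_single_one_of_refines {k : List (Finset α)} (hk : k.Pairwise Disjoint) {y : AX α}
    (hy : ∀ e ∈ y.support, Refines e k) : amul (Finsupp.single k 1) y = y := by
  unfold amul
  rw [Finsupp.sum_single_index (by simp)]
  conv_rhs => rw [← Finsupp.sum_single y]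
  exact Finsupp.sum_congr fun e he => by rw [seqMul_eq_self_of_refines hk (hy e he), one_mul]

theorem one_sub_hatI_annihilates_general {α : Type*} [DecidableEq α] (X : Finset α)
    (I : Finset α)
    (a b : AX α)
    (ha : ∀ c ∈ a.support, IsProperSeq X c)
    (h : amul (oneA X - hatI X I) a = 0) :
    amul (oneA X - hatI X I) (amul b a) = 0 := by
  have hdisjX : [X].Pairwise Disjoint := List.pairwise_singleton _ _
  have hdisjI : [I, X \ I].Pairwise Disjoint := List.pairwise_pair.mpr Finset.disjoint_sdiff
  have haX : ∀ c ∈ a.support, Refines c [X] := fun c hc => (ha c hc).refines_singleton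
  have haI : amul (hatI X I) a = a := by
    rw [amul_sub_left, oneA, amul_single_one_of_refines hdisjX haX, sub_eq_zero] at h
    exact h.symm
  have haI' : ∀ c ∈ a.support, Refines c [I, X \ I] := fun c hc =>
    refines_of_mem_support_amul_single (haI.symm ▸ hc)
  rw [amul_sub_left, oneA, hatI,
    amul_single_one_of_refines hdisjX fun e he => refines_of_mem_support_amul_right haX he,
    amul_single_one_of_refines hdisjI fun e he => refines_of_mem_support_amul_right haI' he,
    sub_self]

/-- If `(1 - Î)·a = 0` in `A(X)` then `(1 - Î)·(b·a) = 0`. -/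
theorem one_sub_hatI_annihilates {α : Type*} [DecidableEq α] (X : Finset α)
    (hX : 2 ≤ X.card) (I : Finset α) (hI : IsProperSubset X I)
    (a b : AX α)
    (ha : ∀ c ∈ a.support, IsProperSeq X c)
    (hb : ∀ c ∈ b.support, IsProperSeq X c)
    (h : amul (oneA X - hatI X I) a = 0) :
    amul (oneA X - hatI X I) (amul b a) = 0 :=
  one_sub_hatI_annihilates_general X I a b ha h

end GRF
end

section
/- If S is a paracell associated to X, then the set S' = {J ⊆ X : X∖J ∈ S} is also a paracell, and S ∩ S' = ∅. -/
open scoped Classical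

namespace GRF

variable {α : Type*} [DecidableEq α]

lemma IsProperSubset.sdiff {X J : Finset α} (h : IsProperSubset X J) :
    IsProperSubset X (X \ J) := by
  obtain ⟨hJX, hJ, hJX'⟩ := h
  refine ⟨Finset.sdiff_subset, ?_, ?_⟩
  · rw [Ne, Finset.sdiff_eq_empty_iff_subset]
    exact fun hXJ => hJX' (hJX.antisymm hXJ)
  · rw [Ne, Finset.sdiff_eq_self_iff_disjoint]
    exact fun hdisj => hJ (Finset.disjoint_self_iff_empty J |>.mp (hdisj.symm.mono_right hJX))

namespace IsParacell

variable {X : Finset α} {S : Set (Finset α)}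

/-- Complementation in `X` swaps `∩` and `∪`, so the closure condition transfers to `opp X S`. -/
lemma opp (hS : IsParacell X S) : IsParacell X (opp X S) := by
  obtain ⟨⟨I, hI⟩, hproper, hclosed⟩ := hS
  refine ⟨⟨X \ I, Finset.sdiff_subset, ?_⟩, ?_, ?_⟩
  · rwa [Finset.sdiff_sdiff_eq_self (hproper I hI).1]
  · rintro J ⟨hJX, hJ⟩
    simpa only [Finset.sdiff_sdiff_eq_self hJX] using (hproper _ hJ).sdiff
  · rintro I ⟨hIX, hI⟩ J ⟨hJX, hJ⟩
    rcases hclosed _ hI _ hJ with h | h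
    · exact .inr ⟨Finset.union_subset hIX hJX, by rwa [Finset.sdiff_union_distrib]⟩
    · exact .inl ⟨Finset.inter_subset_left.trans hIX, by rwa [Finset.sdiff_inter_distrib_right]⟩

/-- If `J` and `X \ J` both lie in `S`, closure would put `∅` or `X` in `S`. -/
lemma inter_opp_eq_empty (hS : IsParacell X S) : S ∩ GRF.opp X S = ∅ := by
  refine Set.eq_empty_of_forall_notMem fun J ⟨hJ, hJX, hJ'⟩ => ?_
  rcases hS.2.2 _ hJ _ hJ' with h | h
  · exact (hS.2.1 _ h).2.1 (Finset.inter_sdiff_self J X)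
  · exact (hS.2.1 _ h).2.2 (Finset.union_sdiff_of_subset hJX)

end IsParacell

theorem opp_paracell_general {α : Type*} [DecidableEq α] (X : Finset α)
    (S : Set (Finset α)) (hS : IsParacell X S) :
    IsParacell X (opp X S) ∧ S ∩ opp X S = ∅ :=
  ⟨hS.opp, hS.inter_opp_eq_empty⟩

/-- The opposite `S' = {J ⊆ X : X∖J ∈ S}` of a paracell is a paracell, disjoint from `S`. -/
theorem opp_paracell {α : Type*} [DecidableEq α] (X : Finset α) (hX : 2 ≤ X.card)
    (S : Set (Finset α)) (hS : IsParacell X S) :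
    IsParacell X (opp X S) ∧ S ∩ opp X S = ∅ :=
  opp_paracell_general X S hS

end GRF
end

section
/- Let S be a precell associated to X. If K and L are disjoint sets with K ∪ L = J ∈ S, then K ∈ S or L ∈ S. -/
open scoped Classical

namespace GRF

open Finset

variable {α : Type*}

lemma IsProperSubset.of_subset {X I J : Finset α} (hJ : IsProperSubset X J) (hIJ : I ⊆ J)
    (hI : I.Nonempty) : IsProperSubset X I :=
  ⟨hIJ.trans hJ.1, hI.ne_empty, fun hIX => hJ.2.2 (hJ.1.antisymm (hIX ▸ hIJ))⟩

lemma IsParacell.self_notMem [DecidableEq α] {X : Finset α} {S : Set (Finset α)}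
    (hS : IsParacell X S) : X ∉ S :=
  fun hX => (hS.2.1 X hX).2.2 rfl

lemma IsParacell.inter_mem_of_union_eq [DecidableEq α] {X I J : Finset α} {S : Set (Finset α)}
    (hS : IsParacell X S) (hI : I ∈ S) (hJ : J ∈ S) (hIJ : I ∪ J = X) : I ∩ J ∈ S :=
  (hS.2.2 I hI J hJ).resolve_right (hIJ ▸ hS.self_notMem)

theorem precell_split_general {α : Type*} [DecidableEq α] (X : Finset α)
    (S : Set (Finset α)) (hS : IsPrecell X S)
    (K L J : Finset α) (hKL : K ∩ L = ∅) (hU : K ∪ L = J) (hJ : J ∈ S) :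
    K ∈ S ∨ L ∈ S := by
  obtain ⟨hpara, hcompl⟩ := hS
  subst hU
  have hJX := hpara.2.1 _ hJ
  rcases K.eq_empty_or_nonempty with rfl | hK
  · simpa using Or.inr hJ
  -- If `K ∉ S` then `X \ K ∈ S`, and `X \ K` meets `J` exactly in `L` while `(X \ K) ∪ J = X ∉ S`.
  refine (hcompl K (hJX.of_subset subset_union_left hK)).imp id fun hKc => ?_
  have hunion : X \ K ∪ (K ∪ L) = X := by
    rw [← union_assoc, sdiff_union_of_subset (union_subset_left hJX.1),
      union_eq_left.2 (union_subset_right hJX.1)]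
  have hinter : X \ K ∩ (K ∪ L) = L := by
    rw [inter_union_distrib_left, sdiff_inter_self, empty_union,
      inter_eq_right, subset_sdiff, disjoint_iff_inter_eq_empty,
      inter_comm]
    exact ⟨union_subset_right hJX.1, hKL⟩
  simpa only [hinter] using hpara.inter_mem_of_union_eq hKc hJ hunion

/-- If `K ∪ L = J ∈ S` with `K ∩ L = ∅` and `S` a precell, then `K ∈ S` or `L ∈ S`. -/
theorem precell_split {α : Type*} [DecidableEq α] (X : Finset α) (hX : 2 ≤ X.card)
    (S : Set (Finset α)) (hS : IsPrecell X S)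
    (K L J : Finset α) (hKL : K ∩ L = ∅) (hU : K ∪ L = J) (hJ : J ∈ S) :
    K ∈ S ∨ L ∈ S :=
  precell_split_general X S hS K L J hKL hU hJ

end GRF
end

section
/- Let X = A ∪ B ∪ {1} with A, B, {1} pairwise disjoint and A, B nonempty. Define the linear map Fac : A(X) → A(A∪{1}) ⊗ A(B∪{1}) by Fac(c) = c_A ⊗ c_B for a proper sequence c = {J_1,...,J_ν}, where c_A = {J_1∩(A∪{1}),...,J_ν∩(A∪{1})} mod ∅ and c_B = {J_1∩(B∪{1}),...,J_ν∩(B∪{1})} mod ∅. Then Fac is an algebra homomorphism: Fac(cf) = Fac(c)·Fac(f) for all c, f ∈ A(X). -/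
/-!
Tracing a sequence on a subset `Y` commutes with blockwise intersection, because
`(I ∩ J) ∩ Y = (I ∩ Y) ∩ (J ∩ Y)` and a block that becomes empty contributes nothing to
either side. `Fac` is the linear extension of the map `c ↦ (c_A, c_B)` on basis elements, so it
is multiplicative as soon as this map is.
-/

open scoped Classical

namespace GRF

variable {α : Type*} [DecidableEq α]

noncomputable def restrictSeq (Y : Finset α) (c : List (Finset α)) : List (Finset α) :=
  (c.map (· ∩ Y)).filter (· ≠ ∅)

lemma restrictSeq_cons (Y J : Finset α) (c : List (Finset α)) :
    restrictSeq Y (J :: c) =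
      if J ∩ Y = ∅ then restrictSeq Y c else (J ∩ Y) :: restrictSeq Y c := by
  by_cases h : J ∩ Y = ∅ <;> simp [restrictSeq, h]

lemma restrictSeq_append (Y : Finset α) (c d : List (Finset α)) :
    restrictSeq Y (c ++ d) = restrictSeq Y c ++ restrictSeq Y d := by
  simp [restrictSeq, List.filter_append]

@[simp]
lemma restrictSeq_empty (c : List (Finset α)) : restrictSeq ∅ c = [] := by
  simp [restrictSeq]

lemma restrictSeq_restrictSeq (Y Z : Finset α) (c : List (Finset α)) :
    restrictSeq Y (restrictSeq Z c) = restrictSeq (Z ∩ Y) c := by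
  induction c with
  | nil => rfl
  | cons J c ih =>
    by_cases hZ : J ∩ Z = ∅
    · have hZY : J ∩ (Z ∩ Y) = ∅ := by rw [← Finset.inter_assoc, hZ, Finset.empty_inter]
      simp only [restrictSeq_cons, hZ, hZY, if_true, ih]
    · simp only [restrictSeq_cons, hZ, if_false, Finset.inter_assoc, ih]

lemma seqMul_cons (a : List (Finset α)) (B : Finset α) (b : List (Finset α)) :
    seqMul a (B :: b) = restrictSeq B a ++ seqMul a b := by
  simp [seqMul, restrictSeq, List.filter_append]

lemma restrictSeq_seqMul (Y : Finset α) (a b : List (Finset α)) :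
    restrictSeq Y (seqMul a b) = seqMul (restrictSeq Y a) (restrictSeq Y b) := by
  induction b with
  | nil => rfl
  | cons B b ih =>
    rw [seqMul_cons, restrictSeq_append, restrictSeq_restrictSeq, ih, restrictSeq_cons]
    by_cases hB : B ∩ Y = ∅
    · simp only [hB, if_true, restrictSeq_empty, List.nil_append]
    · rw [if_neg hB, seqMul_cons, restrictSeq_restrictSeq, Finset.inter_comm Y,
        Finset.inter_assoc, Finset.inter_self]

lemma facSeq_seqMul (A1 B1 : Finset α) (a b : List (Finset α)) :
    facSeq A1 B1 (seqMul a b) =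
      (seqMul (facSeq A1 B1 a).1 (facSeq A1 B1 b).1,
       seqMul (facSeq A1 B1 a).2 (facSeq A1 B1 b).2) :=
  congrArg₂ Prod.mk (restrictSeq_seqMul A1 a b) (restrictSeq_seqMul B1 a b)

lemma Finsupp.mapDomain_sum_sum_single {M N R : Type*} [Semiring R]
    (m : M → M → M) (n : N → N → N) (φ : M → N) (hφ : ∀ a b, φ (m a b) = n (φ a) (φ b))
    (x y : M →₀ R) :
    Finsupp.mapDomain φ (x.sum fun a r => y.sum fun b s => Finsupp.single (m a b) (r * s)) =
      (Finsupp.mapDomain φ x).sum fun a r =>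
        (Finsupp.mapDomain φ y).sum fun b s => Finsupp.single (n a b) (r * s) := by
  rw [Finsupp.sum_mapDomain_index (by simp) (by simp [add_mul, Finsupp.sum_add])]
  simp_rw [Finsupp.mapDomain_sum, Finsupp.mapDomain_single, hφ]
  refine Finsupp.sum_congr fun a _ => ?_
  rw [Finsupp.sum_mapDomain_index (by simp) (by simp [mul_add])]

theorem Fac_mul_general {α : Type*} [DecidableEq α] (A B : Finset α) (o : α)
    (c f : AX α) :
    Fac (insert o A) (insert o B) (amul c f) =
      tmul (Fac (insert o A) (insert o B) c) (Fac (insert o A) (insert o B) f) :=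
  -- `Fac` is `Finsupp.mapDomain (facSeq _ _)` by definition.
  Finsupp.mapDomain_sum_sum_single _ _ _ (facSeq_seqMul _ _) c f

/-- `Fac` is an algebra homomorphism: `Fac(cf) = Fac(c)·Fac(f)`. -/
theorem Fac_mul {α : Type*} [DecidableEq α] (A B : Finset α) (o : α)
    (hA : A.Nonempty) (hB : B.Nonempty) (hAB : Disjoint A B)
    (hoA : o ∉ A) (hoB : o ∉ B)
    (X : Finset α) (hX : X = insert o (A ∪ B))
    (c f : AX α)
    (hc : ∀ d ∈ c.support, IsProperSeq X d)
    (hf : ∀ d ∈ f.support, IsProperSeq X d) :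
    Fac (insert o A) (insert o B) (amul c f) =
      tmul (Fac (insert o A) (insert o B) c) (Fac (insert o A) (insert o B) f) :=
  Fac_mul_general A B o c f

end GRF
end

section
/- Let C, B be disjoint nonempty finite sets, 1, 2 two distinct elements not in C ∪ B, A = C ∪ {2}, X = A ∪ B ∪ {1}, and let V, V' be opposite cells relative to C ∪ B. With T = 2↓V and T' = 2↑V' (opposite cells relative to A∪B), one has the identities (1↑2↑V'‖1,A) = 2↑(1↑V'‖1,C) and (1↓2↓V‖1,A) = 2↓(1↓V‖1,C) as cells relative to A∪{1} = C∪{1,2}. -/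
/-
Every set in play lies in `C ∪ {o, t}` and misses `B`. On such sets a lift by a point outside the
ground set does not change membership of sets avoiding that point, and a lift over `t` only sees
the trace on `C ∪ B`, which is `J ∩ C`. So on both sides membership of a proper `J` becomes
`(o ∉ J ∧ J ∩ C ∈ T) ∨ (o ∈ J ∧ C \ J ∈ T')`, with `(T, T') = (V', V)` resp. `(V, V')`, plus the
boundary case contributed by the outer lift over `t`: `J ∩ C = ∅` with `o ∉ J` for `↑`, and
`C ⊆ J` with `o ∈ J` for `↓`. That the two sides agree there needs only `∅ ∉ V` and `∅ ∉ V'`.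
-/

open scoped Classical

namespace GRF

variable {α : Type*} [DecidableEq α]

section Lift

variable {A B M : Finset α} {o : α} {T : Set (Finset α)}

lemma mem_cellUp_iff_of_subset (hoAB : o ∉ A ∪ B) (hM : M ⊆ A) (hM0 : M ≠ ∅) :
    M ∈ cellUp {o} (A ∪ B) T ↔ M ∈ T := by
  have hMX : M ⊆ A ∪ B := hM.trans Finset.subset_union_left
  have hMX' : M ≠ insert o (A ∪ B) := fun h => hoAB (hMX (h ▸ Finset.mem_insert_self o _))
  simp [cellUp, IsProperSubset, Finset.inter_eq_left.mpr hMX, hM0, hMX', hMX.trans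
    (Finset.subset_insert o _)]

lemma mem_cellDown_iff_of_subset (hoAB : o ∉ A ∪ B) (hBA : ¬ B ⊆ A) (hM : M ⊆ A)
    (hM0 : M ≠ ∅) :
    M ∈ cellDown {o} (A ∪ B) T ↔ M ∈ T := by
  have hMX : M ⊆ A ∪ B := hM.trans Finset.subset_union_left
  have hMX' : M ≠ insert o (A ∪ B) := fun h => hoAB (hMX (h ▸ Finset.mem_insert_self o _))
  have hXM : ¬ A ∪ B ⊆ M := fun h => hBA (Finset.subset_union_right.trans (h.trans hM))
  simp [cellDown, IsProperSubset, Finset.inter_eq_left.mpr hMX, hM0, hMX', hXM, hMX.trans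
    (Finset.subset_insert o _)]

end Lift

section PointLift

variable {B C M : Finset α} {t : α} {T : Set (Finset α)}

lemma inter_union_eq_inter_of_subset_insert (htB : t ∉ B) (hCB : Disjoint C B)
    (hM : M ⊆ insert t C) : M ∩ (C ∪ B) = M ∩ C := by
  rw [Finset.inter_union_distrib_left, Finset.union_eq_left]
  intro x hx
  obtain ⟨hxM, hxB⟩ := Finset.mem_inter.mp hx
  rcases Finset.mem_insert.mp (hM hxM) with rfl | hxC
  · exact absurd hxB htB
  · exact absurd hxB (Finset.disjoint_left.mp hCB hxC)

lemma not_subset_of_subset_insert (htB : t ∉ B) (hBC : ¬ B ⊆ C) (hM : M ⊆ insert t C) :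
    ¬ B ⊆ M := fun hBM =>
  hBC ((Finset.subset_insert_iff_of_notMem htB).mp (hBM.trans hM))

lemma isProperSubset_singleton_union_of_subset_insert (htB : t ∉ B) (hBC : ¬ B ⊆ C)
    (hM : M ⊆ insert t C) (hM0 : M ≠ ∅) : IsProperSubset ({t} ∪ (C ∪ B)) M := by
  refine ⟨hM.trans (Finset.insert_subset_insert t Finset.subset_union_left), hM0, ?_⟩
  rintro rfl
  exact not_subset_of_subset_insert htB hBC hM
    (Finset.subset_union_right.trans Finset.subset_union_right)

variable (htB : t ∉ B) (hCB : Disjoint C B) (hBC : ¬ B ⊆ C) (hM : M ⊆ insert t C)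
  (hM0 : M ≠ ∅)
include htB hCB hBC hM hM0

lemma mem_cellUp_iff_inter_of_subset_insert :
    M ∈ cellUp {t} (C ∪ B) T ↔ M ∩ C = ∅ ∨ M ∩ C ∈ T := by
  simp only [cellUp, Set.mem_ofPred_eq, inter_union_eq_inter_of_subset_insert htB hCB hM,
    isProperSubset_singleton_union_of_subset_insert htB hBC hM hM0, true_and]

lemma mem_cellDown_iff_inter_of_subset_insert : M ∈ cellDown {t} (C ∪ B) T ↔ M ∩ C ∈ T := by
  have hMC : M ∩ C ≠ C ∪ B := fun h =>
    hBC (Finset.subset_union_right.trans (h ▸ Finset.inter_subset_right))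
  simp only [cellDown, Set.mem_ofPred_eq, inter_union_eq_inter_of_subset_insert htB hCB hM,
    isProperSubset_singleton_union_of_subset_insert htB hBC hM hM0, true_and, hMC, false_or]

end PointLift

lemma IsProperSubset.sdiff_ne_empty {A J : Finset α} {o : α}
    (hJ : IsProperSubset (insert o A) J) (hoJ : o ∈ J) : A \ J ≠ ∅ := by
  intro h
  refine hJ.2.2 (hJ.1.antisymm (Finset.insert_subset hoJ ?_))
  exact Finset.sdiff_eq_empty_iff_subset.mp h

section RestCell

variable {A C J : Finset α} {o : α} {S S' T T' : Set (Finset α)}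

lemma mem_restCell_iff (hoA : o ∉ A) (hS : ∀ M ⊆ A, M ≠ ∅ → (M ∈ S ↔ M ∈ T))
    (hS' : ∀ M ⊆ A, M ≠ ∅ → (M ∈ S' ↔ M ∈ T')) :
    J ∈ restCell A o S S' ↔
      IsProperSubset (insert o A) J ∧ (o ∉ J ∧ J ∈ T ∨ o ∈ J ∧ A \ J ∈ T') := by
  refine and_congr_right fun hJ => ?_
  by_cases hoJ : o ∈ J
  · have hJA : ¬ J ⊆ A := fun h => hoA (h hoJ)
    simp [hoJ, hJA, hS' _ Finset.sdiff_subset (hJ.sdiff_ne_empty hoJ)]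
  · have hJA : J ⊆ A := (Finset.subset_insert_iff_of_notMem hoJ).mp hJ.1
    simp [hoJ, hJA, hS _ hJA hJ.2.1]

lemma inter_insert_eq_empty_iff : J ∩ insert o C = ∅ ↔ o ∉ J ∧ J ∩ C = ∅ := by
  simp only [← Finset.disjoint_iff_inter_eq_empty, Finset.disjoint_insert_right]

lemma inter_insert_eq_self_iff : J ∩ insert o C = insert o C ↔ o ∈ J ∧ C \ J = ∅ := by
  rw [Finset.inter_eq_right, Finset.insert_subset_iff, Finset.sdiff_eq_empty_iff_subset]

lemma mem_restCell_inter_insert_iff (hoC : o ∉ C) (hT : ∅ ∉ T) (hT' : ∅ ∉ T')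
    (hS : ∀ M ⊆ C, M ≠ ∅ → (M ∈ S ↔ M ∈ T)) (hS' : ∀ M ⊆ C, M ≠ ∅ → (M ∈ S' ↔ M ∈ T')) :
    J ∩ insert o C ∈ restCell C o S S' ↔ o ∉ J ∧ J ∩ C ∈ T ∨ o ∈ J ∧ C \ J ∈ T' := by
  have hCJ : C \ (J ∩ insert o C) = C \ J := by
    ext x; simp only [Finset.mem_sdiff, Finset.mem_inter, Finset.mem_insert]; tauto
  rw [mem_restCell_iff hoC hS hS', hCJ]
  simp only [IsProperSubset, Finset.inter_subset_right, true_and, Ne, inter_insert_eq_empty_iff,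
    inter_insert_eq_self_iff, Finset.mem_inter, Finset.mem_insert_self, and_true]
  by_cases hoJ : o ∈ J
  · simp only [hoJ, not_true_eq_false, false_and, not_false_eq_true, true_and, false_or]
    exact and_iff_right_of_imp fun h h0 => hT' (h0 ▸ h)
  · simp only [hoJ, Finset.inter_insert_of_notMem hoJ, not_false_eq_true, true_and, false_and,
      or_false, and_true]
    exact and_iff_right_of_imp fun h h0 => hT (h0 ▸ h)

end RestCell

section Recursion

variable {B C J : Finset α} {o t : α} {T T' : Set (Finset α)}

lemma insert_sdiff_inter_eq (htC : t ∉ C) : (insert t C \ J) ∩ C = C \ J := by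
  rw [Finset.sdiff_inter_right_comm, Finset.insert_inter_of_notMem htC, Finset.inter_self]

variable (hCB : Disjoint C B) (hBC : ¬ B ⊆ C) (hot : o ≠ t) (hoCB : o ∉ C ∪ B)
  (htCB : t ∉ C ∪ B)
include hCB hBC hot hoCB htCB

lemma restCell_cellUp_cellUp (hT : ∅ ∉ T) (hT' : ∅ ∉ T') :
    restCell (insert t C) o (cellUp {o} (insert t C ∪ B) (cellUp {t} (C ∪ B) T))
        (cellDown {o} (insert t C ∪ B) (cellDown {t} (C ∪ B) T')) =
      cellUp {t} (insert o C)
        (restCell C o (cellUp {o} (C ∪ B) T) (cellDown {o} (C ∪ B) T')) := by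
  obtain ⟨htC, htB⟩ : t ∉ C ∧ t ∉ B := by simpa using htCB
  have hoC : o ∉ C := fun h => hoCB (Finset.mem_union_left B h)
  have hoAB : o ∉ insert t C ∪ B := by simpa [hot] using hoCB
  have hBA : ¬ B ⊆ insert t C := fun h => hBC ((Finset.subset_insert_iff_of_notMem htB).mp h)
  ext J
  rw [mem_restCell_iff (T := {M | M ∩ C = ∅ ∨ M ∩ C ∈ T}) (T' := {M | M ∩ C ∈ T'})
    (fun h => hoAB (Finset.mem_union_left B h))]
  · simp only [cellUp, Set.mem_ofPred_eq]
    rw [mem_restCell_inter_insert_iff hoC hT hT', inter_insert_eq_empty_iff,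
      insert_sdiff_inter_eq htC, Finset.singleton_union, Finset.insert_comm]
    · tauto
    · exact fun M hM hM0 => mem_cellUp_iff_of_subset hoCB hM hM0
    · exact fun M hM hM0 => mem_cellDown_iff_of_subset hoCB hBC hM hM0
  · exact fun M hM hM0 => (mem_cellUp_iff_of_subset hoAB hM hM0).trans
      (mem_cellUp_iff_inter_of_subset_insert htB hCB hBC hM hM0)
  · exact fun M hM hM0 => (mem_cellDown_iff_of_subset hoAB hBA hM hM0).trans
      (mem_cellDown_iff_inter_of_subset_insert htB hCB hBC hM hM0)

lemma restCell_cellDown_cellDown (hT : ∅ ∉ T) (hT' : ∅ ∉ T') :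
    restCell (insert t C) o (cellDown {o} (insert t C ∪ B) (cellDown {t} (C ∪ B) T))
        (cellUp {o} (insert t C ∪ B) (cellUp {t} (C ∪ B) T')) =
      cellDown {t} (insert o C)
        (restCell C o (cellDown {o} (C ∪ B) T) (cellUp {o} (C ∪ B) T')) := by
  obtain ⟨htC, htB⟩ : t ∉ C ∧ t ∉ B := by simpa using htCB
  have hoC : o ∉ C := fun h => hoCB (Finset.mem_union_left B h)
  have hoAB : o ∉ insert t C ∪ B := by simpa [hot] using hoCB
  have hBA : ¬ B ⊆ insert t C := fun h => hBC ((Finset.subset_insert_iff_of_notMem htB).mp h)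
  ext J
  rw [mem_restCell_iff (T := {M | M ∩ C ∈ T}) (T' := {M | M ∩ C = ∅ ∨ M ∩ C ∈ T'})
    (fun h => hoAB (Finset.mem_union_left B h))]
  · simp only [cellDown, Set.mem_ofPred_eq]
    rw [mem_restCell_inter_insert_iff hoC hT hT', inter_insert_eq_self_iff,
      insert_sdiff_inter_eq htC, Finset.singleton_union, Finset.insert_comm]
    · tauto
    · exact fun M hM hM0 => mem_cellDown_iff_of_subset hoCB hBC hM hM0
    · exact fun M hM hM0 => mem_cellUp_iff_of_subset hoCB hM hM0
  · exact fun M hM hM0 => (mem_cellDown_iff_of_subset hoAB hBA hM hM0).trans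
      (mem_cellDown_iff_inter_of_subset_insert htB hCB hBC hM hM0)
  · exact fun M hM hM0 => (mem_cellUp_iff_of_subset hoAB hM hM0).trans
      (mem_cellUp_iff_inter_of_subset_insert htB hCB hBC hM hM0)

end Recursion

theorem restCell_recursion_general {α : Type*} [DecidableEq α] (C B : Finset α) (o t : α)
    (hB : B.Nonempty) (hCB : Disjoint C B)
    (hot : o ≠ t) (hoCB : o ∉ C ∪ B) (htCB : t ∉ C ∪ B)
    (V : Set (Finset α)) (hV : IsCell (C ∪ B) V) :
    restCell (insert t C) o
        (cellUp {o} (insert t C ∪ B) (cellUp {t} (C ∪ B) (opp (C ∪ B) V)))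
        (cellDown {o} (insert t C ∪ B) (cellDown {t} (C ∪ B) V)) =
      cellUp {t} (insert o C)
        (restCell C o (cellUp {o} (C ∪ B) (opp (C ∪ B) V))
          (cellDown {o} (C ∪ B) V)) ∧
    restCell (insert t C) o
        (cellDown {o} (insert t C ∪ B) (cellDown {t} (C ∪ B) V))
        (cellUp {o} (insert t C ∪ B) (cellUp {t} (C ∪ B) (opp (C ∪ B) V))) =
      cellDown {t} (insert o C)
        (restCell C o (cellDown {o} (C ∪ B) V)
          (cellUp {o} (C ∪ B) (opp (C ∪ B) V))) := by
  obtain ⟨b, hb⟩ := hB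
  have hBC : ¬ B ⊆ C := fun h => Finset.disjoint_left.mp hCB (h hb) hb
  have hV0 : ∅ ∉ V := fun h => (hV.1.1.2.1 ∅ h).2.1 rfl
  have hV'0 : ∅ ∉ opp (C ∪ B) V := fun h => (hV.1.1.2.1 _ h.2).2.2 Finset.sdiff_empty
  exact ⟨restCell_cellUp_cellUp hCB hBC hot hoCB htCB hV'0 hV0,
    restCell_cellDown_cellDown hCB hBC hot hoCB htCB hV0 hV'0⟩

/-- `(1↑2↑V'‖1,A) = 2↑(1↑V'‖1,C)` and `(1↓2↓V‖1,A) = 2↓(1↓V‖1,C)` as cells relative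
to `A ∪ {1} = C ∪ {1,2}`, where `A = C ∪ {2}`. -/
theorem restCell_recursion {α : Type*} [DecidableEq α] (C B : Finset α) (o t : α)
    (hC : C.Nonempty) (hB : B.Nonempty) (hCB : Disjoint C B)
    (hot : o ≠ t) (hoCB : o ∉ C ∪ B) (htCB : t ∉ C ∪ B)
    (V : Set (Finset α)) (hV : IsCell (C ∪ B) V) :
    restCell (insert t C) o
        (cellUp {o} (insert t C ∪ B) (cellUp {t} (C ∪ B) (opp (C ∪ B) V)))
        (cellDown {o} (insert t C ∪ B) (cellDown {t} (C ∪ B) V)) =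
      cellUp {t} (insert o C)
        (restCell C o (cellUp {o} (C ∪ B) (opp (C ∪ B) V))
          (cellDown {o} (C ∪ B) V)) ∧
    restCell (insert t C) o
        (cellDown {o} (insert t C ∪ B) (cellDown {t} (C ∪ B) V))
        (cellUp {o} (insert t C ∪ B) (cellUp {t} (C ∪ B) (opp (C ∪ B) V))) =
      cellDown {t} (insert o C)
        (restCell C o (cellDown {o} (C ∪ B) V)
          (cellUp {o} (C ∪ B) (opp (C ∪ B) V))) :=
  restCell_recursion_general C B o t hB hCB hot hoCB htCB V hV

end GRF
end
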